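/- arXiv:1708.07236 — 3 statements merged into one kernel-verified Lean document; each statement's English description precedes it below -/
import Mathlib

section
/- Let m ≤ n and regard S_m ⊆ S_n via the embedding where a permutation of {1,...,m} fixes all points of {m+1,...,n}. Suppose w ∈ S_n is an upper bound in Bruhat order to permutations w_1, ..., w_k ∈ S_m. Then there exists w' ∈ S_n fixing all points greater than m (i.e. w' ∈ S_m) such that w_i ≤ w' ≤ w in Bruhat order for all i = 1, ..., k. -/
/-- The entry of an `n × n` integer matrix in 1-based coordinates;
`0` outside the grid `[1,n] × [1,n]`. -/
def entry1 {n : ℕ} (A : Matrix (Fin n) (Fin n) ℤ) (i j : ℕ) : ℤ :=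
  if h : 1 ≤ i ∧ i ≤ n ∧ 1 ≤ j ∧ j ≤ n then
    A ⟨i - 1, by omega⟩ ⟨j - 1, by omega⟩ else 0

/-- The corner sum `r_A(i,j) = ∑_{k ≤ i} ∑_{l ≤ j} a_{k l}` (1-based). -/
def cornerSum {n : ℕ} (A : Matrix (Fin n) (Fin n) ℤ) (i j : ℕ) : ℤ :=
  ∑ k ∈ Finset.Icc 1 i, ∑ l ∈ Finset.Icc 1 j, entry1 A k l

/-- Partial row sum `∑_{l=1}^{j} a_{i l}`. -/
def rowPartial {n : ℕ} (A : Matrix (Fin n) (Fin n) ℤ) (i j : ℕ) : ℤ :=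
  ∑ l ∈ Finset.Icc 1 j, entry1 A i l

/-- Partial column sum `∑_{k=1}^{i} a_{k j}`. -/
def colPartial {n : ℕ} (A : Matrix (Fin n) (Fin n) ℤ) (i j : ℕ) : ℤ :=
  ∑ k ∈ Finset.Icc 1 i, entry1 A k j

/-- `A` is an alternating sign matrix: every partial row and column sum is `0`
or `1`, and every full row and column sums to `1`. -/
def IsASM {n : ℕ} (A : Matrix (Fin n) (Fin n) ℤ) : Prop :=
  (∀ i j : ℕ, rowPartial A i j = 0 ∨ rowPartial A i j = 1) ∧
  (∀ i j : ℕ, colPartial A i j = 0 ∨ colPartial A i j = 1) ∧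
  (∀ i : ℕ, 1 ≤ i → i ≤ n → rowPartial A i n = 1) ∧
  (∀ j : ℕ, 1 ≤ j → j ≤ n → colPartial A n j = 1)

/-- `A` is a partial alternating sign matrix: every partial row and column sum
is `0` or `1`. -/
def IsPartialASM {n : ℕ} (A : Matrix (Fin n) (Fin n) ℤ) : Prop :=
  (∀ i j : ℕ, rowPartial A i j = 0 ∨ rowPartial A i j = 1) ∧
  (∀ i j : ℕ, colPartial A i j = 0 ∨ colPartial A i j = 1)

/-- `(i,j)` (1-based) is in the Rothe diagram `D(A)`:
`∑_{k > i, l > j} a_{i l} a_{k j} = 1`. -/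
def InDiagram {n : ℕ} (A : Matrix (Fin n) (Fin n) ℤ) (i j : ℕ) : Prop :=
  (∑ k ∈ Finset.Icc 1 n, ∑ l ∈ Finset.Icc 1 n,
    (if i < k ∧ j < l then entry1 A i l * entry1 A k j else 0)) = 1

/-- `(i,j)` is in the essential set `Ess(A)`. -/
def InEss {n : ℕ} (A : Matrix (Fin n) (Fin n) ℤ) (i j : ℕ) : Prop :=
  InDiagram A i j ∧ ¬ InDiagram A (i + 1) j ∧ ¬ InDiagram A i (j + 1)

/-- The permutation matrix of `w` (a `1` in positions `(a, w a)`). -/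
def permMatrix {n : ℕ} (w : Equiv.Perm (Fin n)) : Matrix (Fin n) (Fin n) ℤ :=
  Matrix.of fun a b => if w a = b then 1 else 0

/-- The value `w(a)` of the permutation `w` in 1-based coordinates, extended by
the identity outside `[1,n]`. -/
def pval {n : ℕ} (w : Equiv.Perm (Fin n)) (a : ℕ) : ℕ :=
  if h : 1 ≤ a ∧ a ≤ n then ((w ⟨a - 1, by omega⟩ : Fin n) : ℕ) + 1 else a

/-- The value function (1-based) of the biGrassmannian permutation `[i,j,r]_b`. -/
def biGrFun (i j r a : ℕ) : ℕ :=
  if a ≤ r then a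
  else if a ≤ i then a + (j - r)
  else if a ≤ i + j - r then a - (i - r)
  else a

/-- The permutation matrix of the biGrassmannian permutation `[i,j,r]_b ∈ S_n`. -/
def biGrMatrix (n i j r : ℕ) : Matrix (Fin n) (Fin n) ℤ :=
  Matrix.of fun a b => if biGrFun i j r ((a : ℕ) + 1) = (b : ℕ) + 1 then 1 else 0

/-- `u ∈ S_n` is the biGrassmannian permutation `[i,j,r]_b`, i.e. its values
are given by the defining formula. -/
def IsBiGrPerm (n i j r : ℕ) (u : Equiv.Perm (Fin n)) : Prop :=
  ∀ a : ℕ, 1 ≤ a → a ≤ n → pval u a = biGrFun i j r a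

/-- `(a,b)` (1-based) is in the Rothe diagram of the permutation `w`:
`w(a) > b` and `w⁻¹(b) > a`. -/
def InPermDiagram {n : ℕ} (w : Equiv.Perm (Fin n)) (a b : ℕ) : Prop :=
  1 ≤ a ∧ a ≤ n ∧ 1 ≤ b ∧ b ≤ n ∧ b < pval w a ∧ a < pval w⁻¹ b

/-- `(a,b)` is in the essential set of the permutation `w`. -/
def InPermEss {n : ℕ} (w : Equiv.Perm (Fin n)) (a b : ℕ) : Prop :=
  InPermDiagram w a b ∧ ¬ InPermDiagram w (a + 1) b ∧ ¬ InPermDiagram w a (b + 1)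

/-- `w` has a descent at (1-based) position `d`: `w(d) > w(d+1)`. -/
def HasDescentAt {n : ℕ} (w : Equiv.Perm (Fin n)) (d : ℕ) : Prop :=
  1 ≤ d ∧ d < n ∧ pval w (d + 1) < pval w d

/-- `u` is biGrassmannian: both `u` and `u⁻¹` have a unique descent. -/
def IsBiGrassmannian {n : ℕ} (u : Equiv.Perm (Fin n)) : Prop :=
  (∃! d : ℕ, HasDescentAt u d) ∧ (∃! d : ℕ, HasDescentAt u⁻¹ d)

/-!
Write `r_u` for the corner-sum function of `u` and `w₀` for the longest element of `S_m ⊆ S_n`,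
whose corner-sum function is `min(i,j,n)` off the block `[0,m]²` and `(i + j - m)⁺` on it.
Every `u ∈ S_m` has `r_u ≥ r_{w₀}`, so `R = max r_w r_{w₀}` satisfies `r_w ≤ R ≤ r_{w_t}`.
Corner-sum functions of permutations are exactly the functions with `0/1` steps in both
directions, nonnegative second differences and the boundary values of the identity. `R`
inherits everything but the second differences from `r_w` and `r_{w₀}`; for those, off the
block `R` is `min(i,j,n)`, and on it a unit-step supermodular function stays supermodular after
taking the maximum with `(i + j - m)⁺`. Hence `R = r_{w'}`, and `R = min(i,j,n)` off the block
puts a `1` of the permutation matrix of `w'` at every diagonal position beyond `m`.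
-/

open Finset

def secondDiff (f : ℕ → ℕ → ℤ) (i j : ℕ) : ℤ :=
  f (i + 1) (j + 1) - f (i + 1) j - f i (j + 1) + f i j

theorem eq_of_secondDiff_eq {f g : ℕ → ℕ → ℤ} (h_left : ∀ j, f 0 j = g 0 j)
    (h_right : ∀ i, f i 0 = g i 0) (h : ∀ i j, secondDiff f i j = secondDiff g i j) :
    f = g := by
  funext i j
  induction i generalizing j with
  | zero => exact h_left j
  | succ i ihi =>
    induction j with
    | zero => exact h_right (i + 1)
    | succ j ihj =>
      have := h i j
      simp only [secondDiff] at this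
      linarith [ihi j, ihi (j + 1)]

theorem sum_range_secondDiff_right (f : ℕ → ℕ → ℤ) (i J : ℕ) :
    ∑ j ∈ range J, secondDiff f i j = (f (i + 1) J - f i J) - (f (i + 1) 0 - f i 0) := by
  rw [← sum_range_sub (fun j => f (i + 1) j - f i j)]
  exact sum_congr rfl fun j _ => by simp only [secondDiff]; ring

theorem sum_range_secondDiff_left (f : ℕ → ℕ → ℤ) (I j : ℕ) :
    ∑ i ∈ range I, secondDiff f i j = (f I (j + 1) - f I j) - (f 0 (j + 1) - f 0 j) := by
  rw [← sum_range_sub (fun i => f i (j + 1) - f i j)]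
  exact sum_congr rfl fun i _ => by simp only [secondDiff]; ring

section Matrix

variable {n : ℕ} (A : Matrix (Fin n) (Fin n) ℤ)

theorem entry1_succ_succ (a b : Fin n) : entry1 A (a + 1) (b + 1) = A a b := by
  rw [entry1, dif_pos (by omega)]
  rfl

theorem cornerSum_zero_left (j : ℕ) : cornerSum A 0 j = 0 := by
  simp [cornerSum]

theorem cornerSum_zero_right (i : ℕ) : cornerSum A i 0 = 0 := by
  simp [cornerSum]

theorem rowPartial_succ (i j : ℕ) :
    rowPartial A i (j + 1) = rowPartial A i j + entry1 A i (j + 1) :=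
  sum_Icc_succ_top (by omega) _

theorem cornerSum_succ_left (i j : ℕ) :
    cornerSum A (i + 1) j = cornerSum A i j + rowPartial A (i + 1) j :=
  sum_Icc_succ_top (by omega) _

theorem secondDiff_cornerSum (i j : ℕ) :
    secondDiff (cornerSum A) i j = entry1 A (i + 1) (j + 1) := by
  simp only [secondDiff, cornerSum_succ_left, rowPartial_succ]
  ring

end Matrix

theorem existsUnique_eq_one_of_sum_eq_one {ι : Type*} [Fintype ι] {g : ι → ℤ}
    (h_nonneg : ∀ x, 0 ≤ g x) (h_le_one : ∀ x, g x ≤ 1) (h_sum : ∑ x, g x = 1) :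
    ∃! x, g x = 1 := by
  obtain ⟨x, -, hx⟩ := exists_ne_zero_of_sum_ne_zero (h_sum ▸ one_ne_zero : ∑ x, g x ≠ 0)
  have hx_one : g x = 1 := by
    have := h_nonneg x
    have := h_le_one x
    omega
  refine ⟨x, hx_one, fun y hy => by_contra fun hne => ?_⟩
  have := add_le_sum (fun i _ => h_nonneg i) (mem_univ y) (mem_univ x) hne
  omega

structure IsPermCornerSum (n : ℕ) (f : ℕ → ℕ → ℤ) : Prop where
  zero_left : ∀ j, f 0 j = 0
  zero_right : ∀ i, f i 0 = 0
  le_succ_left : ∀ i j, f i j ≤ f (i + 1) j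
  le_succ_right : ∀ i j, f i j ≤ f i (j + 1)
  succ_left_le : ∀ i j, f (i + 1) j ≤ f i j + 1
  succ_right_le : ∀ i j, f i (j + 1) ≤ f i j + 1
  secondDiff_nonneg : ∀ i j, 0 ≤ secondDiff f i j
  of_le_left : ∀ i j, n ≤ i → f i j = min j n
  of_le_right : ∀ i j, n ≤ j → f i j = min i n

namespace IsPermCornerSum

variable {n : ℕ} {f : ℕ → ℕ → ℤ}

theorem mono (hf : IsPermCornerSum n f) {i i' j j' : ℕ} (hi : i ≤ i') (hj : j ≤ j') :
    f i j ≤ f i' j' :=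
  (monotone_nat_of_le_succ (hf.le_succ_left · j) hi).trans
    (monotone_nat_of_le_succ (hf.le_succ_right i' ·) hj)

theorem nonneg (hf : IsPermCornerSum n f) (i j : ℕ) : 0 ≤ f i j :=
  hf.zero_left 0 ▸ hf.mono (Nat.zero_le i) (Nat.zero_le j)

theorem le_add_left (hf : IsPermCornerSum n f) (i j d : ℕ) : f (i + d) j ≤ f i j + d := by
  induction d with
  | zero => simp
  | succ d ih =>
    rw [← add_assoc]
    have := hf.succ_left_le (i + d) j
    push_cast
    omega

theorem le_add_right (hf : IsPermCornerSum n f) (i j d : ℕ) : f i (j + d) ≤ f i j + d := by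
  induction d with
  | zero => simp
  | succ d ih =>
    rw [← add_assoc]
    have := hf.succ_right_le i (j + d)
    push_cast
    omega

theorem le_left (hf : IsPermCornerSum n f) (i j : ℕ) : f i j ≤ i := by
  simpa [hf.zero_left] using hf.le_add_left 0 j i

theorem le_right (hf : IsPermCornerSum n f) (i j : ℕ) : f i j ≤ j := by
  simpa [hf.zero_right] using hf.le_add_right i 0 j

theorem le_dim (hf : IsPermCornerSum n f) (i j : ℕ) : f i j ≤ n := by
  have := hf.mono (le_refl i) (Nat.le_add_left j n)
  rw [hf.of_le_right i (n + j) (Nat.le_add_right n j)] at this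
  omega

theorem secondDiff_le_one (hf : IsPermCornerSum n f) (i j : ℕ) : secondDiff f i j ≤ 1 := by
  have := hf.succ_left_le i (j + 1)
  have := hf.le_succ_left i j
  simp only [secondDiff]
  omega

theorem secondDiff_of_le_left (hf : IsPermCornerSum n f) {i : ℕ} (j : ℕ) (hi : n ≤ i) :
    secondDiff f i j = 0 := by
  simp only [secondDiff, hf.of_le_left i _ hi, hf.of_le_left (i + 1) _ (by omega)]
  ring

theorem secondDiff_of_le_right (hf : IsPermCornerSum n f) (i : ℕ) {j : ℕ} (hj : n ≤ j) :
    secondDiff f i j = 0 := by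
  simp only [secondDiff, hf.of_le_right _ j hj, hf.of_le_right _ (j + 1) (by omega)]
  ring

theorem existsUnique_secondDiff_row (hf : IsPermCornerSum n f) (a : Fin n) :
    ∃! b : Fin n, secondDiff f a b = 1 := by
  refine existsUnique_eq_one_of_sum_eq_one (fun b => hf.secondDiff_nonneg a b)
    (fun b => hf.secondDiff_le_one a b) ?_
  rw [Fin.sum_univ_eq_sum_range (secondDiff f a) n, sum_range_secondDiff_right,
    hf.of_le_right _ _ le_rfl, hf.of_le_right _ _ le_rfl, hf.zero_right, hf.zero_right]
  omega

theorem existsUnique_secondDiff_col (hf : IsPermCornerSum n f) (b : Fin n) :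
    ∃! a : Fin n, secondDiff f a b = 1 := by
  refine existsUnique_eq_one_of_sum_eq_one (fun a => hf.secondDiff_nonneg a b)
    (fun a => hf.secondDiff_le_one a b) ?_
  rw [Fin.sum_univ_eq_sum_range (secondDiff f · b) n, sum_range_secondDiff_left,
    hf.of_le_left _ _ le_rfl, hf.of_le_left _ _ le_rfl, hf.zero_left, hf.zero_left]
  omega

theorem exists_perm (hf : IsPermCornerSum n f) :
    ∃ u : Equiv.Perm (Fin n), cornerSum (permMatrix u) = f := by
  choose σ hσ using fun a => (hf.existsUnique_secondDiff_row a).exists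
  have hσ_inj : Function.Injective σ := fun a a' h =>
    (hf.existsUnique_secondDiff_col (σ a')).unique (h ▸ hσ a) (hσ a')
  refine ⟨Equiv.ofBijective σ (Finite.injective_iff_bijective.mp hσ_inj),
    eq_of_secondDiff_eq (fun j => by rw [cornerSum_zero_left, hf.zero_left])
      (fun i => by rw [cornerSum_zero_right, hf.zero_right]) fun i j => ?_⟩
  rw [secondDiff_cornerSum]
  by_cases hij : i < n ∧ j < n
  · obtain ⟨a, b, rfl, rfl⟩ : ∃ a b : Fin n, (a : ℕ) = i ∧ (b : ℕ) = j :=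
      ⟨⟨i, hij.1⟩, ⟨j, hij.2⟩, rfl, rfl⟩
    rw [entry1_succ_succ]
    simp only [permMatrix, Matrix.of_apply, Equiv.ofBijective_apply]
    split_ifs with h
    · exact h ▸ (hσ a).symm
    · have hne : secondDiff f a b ≠ 1 := fun h1 =>
        h ((hf.existsUnique_secondDiff_row a).unique (hσ a) h1)
      have := hf.secondDiff_nonneg a b
      have := hf.secondDiff_le_one a b
      omega
  · rw [entry1, dif_neg (by omega)]
    rcases Nat.lt_or_ge i n with hi | hi
    · rw [hf.secondDiff_of_le_right i (by omega)]
    · rw [hf.secondDiff_of_le_left j hi]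

end IsPermCornerSum

section PermMatrix

variable {n : ℕ} (u : Equiv.Perm (Fin n))

theorem exists_fin_add_one_eq {i : ℕ} (hi : 1 ≤ i) (hin : i ≤ n) :
    ∃ a : Fin n, (a : ℕ) + 1 = i :=
  ⟨⟨i - 1, by omega⟩, by simp only; omega⟩

theorem pval_succ (a : Fin n) : pval u (a + 1) = u a + 1 := by
  rw [pval, dif_pos (by omega)]
  rfl

theorem pval_mem_Icc {a : ℕ} (ha : 1 ≤ a) (han : a ≤ n) :
    1 ≤ pval u a ∧ pval u a ≤ n := by
  obtain ⟨a, rfl⟩ := exists_fin_add_one_eq ha han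
  rw [pval_succ]
  omega

theorem entry1_permMatrix (i j : ℕ) :
    entry1 (permMatrix u) i j = if 1 ≤ i ∧ i ≤ n ∧ pval u i = j then 1 else 0 := by
  by_cases h : 1 ≤ i ∧ i ≤ n ∧ 1 ≤ j ∧ j ≤ n
  · obtain ⟨a, rfl⟩ := exists_fin_add_one_eq h.1 h.2.1
    obtain ⟨b, rfl⟩ := exists_fin_add_one_eq h.2.2.1 h.2.2.2
    simp [entry1_succ_succ, permMatrix, pval_succ, Fin.ext_iff]
  · rw [entry1, dif_neg h, if_neg]
    rintro ⟨hi1, hin, rfl⟩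
    exact h ⟨hi1, hin, pval_mem_Icc u hi1 hin⟩

theorem rowPartial_permMatrix (i j : ℕ) :
    rowPartial (permMatrix u) i j = if 1 ≤ i ∧ i ≤ n ∧ pval u i ≤ j then 1 else 0 := by
  induction j with
  | zero =>
    rw [rowPartial, Icc_eq_empty (by omega), sum_empty, if_neg]
    rintro ⟨hi1, hin, h⟩
    have := pval_mem_Icc u hi1 hin
    omega
  | succ j ih =>
    rw [rowPartial_succ, ih, entry1_permMatrix]
    split_ifs <;> omega

theorem entry1_permMatrix_inv (i j : ℕ) :
    entry1 (permMatrix u⁻¹) j i = entry1 (permMatrix u) i j := by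
  by_cases h : 1 ≤ i ∧ i ≤ n ∧ 1 ≤ j ∧ j ≤ n
  · obtain ⟨a, rfl⟩ := exists_fin_add_one_eq h.1 h.2.1
    obtain ⟨b, rfl⟩ := exists_fin_add_one_eq h.2.2.1 h.2.2.2
    simp only [entry1_succ_succ, permMatrix, Matrix.of_apply, Equiv.Perm.inv_eq_iff_eq]
    exact if_congr eq_comm rfl rfl
  · rw [entry1, entry1, dif_neg (by omega), dif_neg (by omega)]

theorem cornerSum_permMatrix_inv (i j : ℕ) :
    cornerSum (permMatrix u⁻¹) j i = cornerSum (permMatrix u) i j := by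
  simp only [cornerSum, entry1_permMatrix_inv]
  exact sum_comm

theorem cornerSum_permMatrix_succ_left (i j : ℕ) :
    cornerSum (permMatrix u) (i + 1) j =
      cornerSum (permMatrix u) i j + if i < n ∧ pval u (i + 1) ≤ j then 1 else 0 := by
  rw [cornerSum_succ_left, rowPartial_permMatrix]
  exact congrArg _ (if_congr (by omega) rfl rfl)

theorem cornerSum_permMatrix_of_le_right (i : ℕ) {j : ℕ} (hj : n ≤ j) :
    cornerSum (permMatrix u) i j = min i n := by
  induction i with
  | zero => simp [cornerSum_zero_left]
  | succ i ih =>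
    rw [cornerSum_permMatrix_succ_left, ih]
    split_ifs with h
    · omega
    · have := pval_mem_Icc u (a := i + 1)
      omega

theorem isPermCornerSum_cornerSum_permMatrix :
    IsPermCornerSum n (cornerSum (permMatrix u)) := by
  have h_left : ∀ v : Equiv.Perm (Fin n), ∀ i j,
      cornerSum (permMatrix v) i j ≤ cornerSum (permMatrix v) (i + 1) j ∧
        cornerSum (permMatrix v) (i + 1) j ≤ cornerSum (permMatrix v) i j + 1 := by
    intro v i j
    rw [cornerSum_permMatrix_succ_left]
    split_ifs <;> omega
  have h_swap : ∀ i j, cornerSum (permMatrix u) i j = cornerSum (permMatrix u⁻¹) j i :=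
    fun i j => (cornerSum_permMatrix_inv u i j).symm
  refine ⟨cornerSum_zero_left _, cornerSum_zero_right _, fun i j => (h_left u i j).1,
    fun i j => ?_, fun i j => (h_left u i j).2, fun i j => ?_, fun i j => ?_,
    fun i j hi => ?_, fun i j => cornerSum_permMatrix_of_le_right u i⟩
  · simpa only [h_swap] using (h_left u⁻¹ j i).1
  · simpa only [h_swap] using (h_left u⁻¹ j i).2
  · rw [secondDiff_cornerSum, entry1_permMatrix]
    split_ifs <;> omega
  · rw [h_swap]
    exact cornerSum_permMatrix_of_le_right u⁻¹ j hi

end PermMatrix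

/-- The corner-sum function of the longest element of `S_m ⊆ S_n`, which reverses `1, …, m`. -/
def longestCornerSum (m n i j : ℕ) : ℤ :=
  max 0 ((min i m + min j m : ℕ) - (m : ℤ)) + max 0 ((min (min i j) n : ℕ) - (m : ℤ))

section LongestCornerSum

variable {m n : ℕ}

theorem longestCornerSum_of_le (hmn : m ≤ n) {i j : ℕ} (h : m ≤ i ∨ m ≤ j) :
    longestCornerSum m n i j = min (min i j) n := by
  simp only [longestCornerSum]
  omega

theorem longestCornerSum_of_le_of_le {i j : ℕ} (hi : i ≤ m) (hj : j ≤ m) :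
    longestCornerSum m n i j = max 0 ((i + j : ℕ) - (m : ℤ)) := by
  simp only [longestCornerSum]
  omega

theorem isPermCornerSum_longestCornerSum (hmn : m ≤ n) :
    IsPermCornerSum n (longestCornerSum m n) where
  zero_left j := by simp only [longestCornerSum]; omega
  zero_right i := by simp only [longestCornerSum]; omega
  le_succ_left i j := by simp only [longestCornerSum]; omega
  le_succ_right i j := by simp only [longestCornerSum]; omega
  succ_left_le i j := by simp only [longestCornerSum]; omega
  succ_right_le i j := by simp only [longestCornerSum]; omega
  secondDiff_nonneg i j := by
    simp only [secondDiff]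
    by_cases h : m ≤ i ∨ m ≤ j
    · rw [longestCornerSum_of_le hmn h,
        longestCornerSum_of_le hmn (i := i + 1) (j := j) (by omega),
        longestCornerSum_of_le hmn (i := i) (j := j + 1) (by omega),
        longestCornerSum_of_le hmn (i := i + 1) (j := j + 1) (by omega)]
      omega
    · rw [longestCornerSum_of_le_of_le (by omega : i + 1 ≤ m) (by omega : j + 1 ≤ m),
        longestCornerSum_of_le_of_le (by omega : i ≤ m) (by omega : j + 1 ≤ m),
        longestCornerSum_of_le_of_le (by omega : i + 1 ≤ m) (by omega : j ≤ m),
        longestCornerSum_of_le_of_le (by omega : i ≤ m) (by omega : j ≤ m)]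
      omega
  of_le_left i j hi := longestCornerSum_of_le hmn (Or.inl (hmn.trans hi)) |>.trans (by omega)
  of_le_right i j hj := longestCornerSum_of_le hmn (Or.inr (hmn.trans hj)) |>.trans (by omega)

end LongestCornerSum

namespace IsPermCornerSum

variable {m n : ℕ} {f g : ℕ → ℕ → ℤ}

theorem max_of_secondDiff_nonneg (hf : IsPermCornerSum n f) (hg : IsPermCornerSum n g)
    (h : ∀ i j, 0 ≤ secondDiff (fun i j => max (f i j) (g i j)) i j) :
    IsPermCornerSum n (fun i j => max (f i j) (g i j)) where
  zero_left j := by simp only [hf.zero_left, hg.zero_left, max_self]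
  zero_right i := by simp only [hf.zero_right, hg.zero_right, max_self]
  le_succ_left i j := max_le_max (hf.le_succ_left i j) (hg.le_succ_left i j)
  le_succ_right i j := max_le_max (hf.le_succ_right i j) (hg.le_succ_right i j)
  succ_left_le i j := by
    have := hf.succ_left_le i j
    have := hg.succ_left_le i j
    omega
  succ_right_le i j := by
    have := hf.succ_right_le i j
    have := hg.succ_right_le i j
    omega
  secondDiff_nonneg := h
  of_le_left i j hi := by simp only [hf.of_le_left i j hi, hg.of_le_left i j hi, max_self]
  of_le_right i j hj := by simp only [hf.of_le_right i j hj, hg.of_le_right i j hj, max_self]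

theorem max_longestCornerSum_of_le (hf : IsPermCornerSum n f) {i j : ℕ} (hmn : m ≤ n)
    (h : m ≤ i ∨ m ≤ j) : max (f i j) (longestCornerSum m n i j) = min (min i j) n := by
  rw [longestCornerSum_of_le hmn h]
  have := hf.le_left i j
  have := hf.le_right i j
  have := hf.le_dim i j
  omega

theorem secondDiff_max_longestCornerSum_nonneg (hf : IsPermCornerSum n f) (hmn : m ≤ n)
    (i j : ℕ) : 0 ≤ secondDiff (fun i j => max (f i j) (longestCornerSum m n i j)) i j := by
  simp only [secondDiff]
  by_cases h : m ≤ i ∨ m ≤ j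
  · rw [hf.max_longestCornerSum_of_le hmn h,
      hf.max_longestCornerSum_of_le hmn (i := i + 1) (j := j) (by omega),
      hf.max_longestCornerSum_of_le hmn (i := i) (j := j + 1) (by omega),
      hf.max_longestCornerSum_of_le hmn (i := i + 1) (j := j + 1) (by omega)]
    omega
  · rw [longestCornerSum_of_le_of_le (by omega : i + 1 ≤ m) (by omega : j + 1 ≤ m),
      longestCornerSum_of_le_of_le (by omega : i ≤ m) (by omega : j + 1 ≤ m),
      longestCornerSum_of_le_of_le (by omega : i + 1 ≤ m) (by omega : j ≤ m),
      longestCornerSum_of_le_of_le (by omega : i ≤ m) (by omega : j ≤ m)]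
    have h_super := hf.secondDiff_nonneg i j
    simp only [secondDiff] at h_super
    have := hf.le_succ_left i j
    have := hf.succ_left_le i j
    have := hf.le_succ_right i j
    have := hf.succ_right_le i j
    have := hf.le_succ_left i (j + 1)
    have := hf.succ_left_le i (j + 1)
    have := hf.le_succ_right (i + 1) j
    have := hf.succ_right_le (i + 1) j
    omega

theorem secondDiff_max_longestCornerSum_self (hf : IsPermCornerSum n f) (hmn : m ≤ n) {a : ℕ}
    (hma : m ≤ a) (han : a < n) :
    secondDiff (fun i j => max (f i j) (longestCornerSum m n i j)) a a = 1 := by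
  simp only [secondDiff]
  rw [hf.max_longestCornerSum_of_le hmn (i := a) (j := a) (Or.inl hma),
    hf.max_longestCornerSum_of_le hmn (i := a + 1) (j := a) (by omega),
    hf.max_longestCornerSum_of_le hmn (i := a) (j := a + 1) (by omega),
    hf.max_longestCornerSum_of_le hmn (i := a + 1) (j := a + 1) (by omega)]
  omega

end IsPermCornerSum

section FixingTail

variable {m n : ℕ} {u : Equiv.Perm (Fin n)}

theorem lt_of_forall_le_apply_eq (hu : ∀ a : Fin n, m ≤ (a : ℕ) → u a = a) {c : ℕ}
    (hmc : m ≤ c) {a : Fin n} (ha : (a : ℕ) < c) : (u a : ℕ) < c := by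
  by_contra h
  have : u a = a := u.injective (hu (u a) (by omega))
  omega

theorem inv_apply_eq_of_forall_le_apply_eq (hu : ∀ a : Fin n, m ≤ (a : ℕ) → u a = a) :
    ∀ a : Fin n, m ≤ (a : ℕ) → u⁻¹ a = a :=
  fun a ha => Equiv.Perm.inv_eq_iff_eq.mpr (hu a ha).symm

theorem cornerSum_permMatrix_of_forall_le_apply_eq (hu : ∀ a : Fin n, m ≤ (a : ℕ) → u a = a)
    {c : ℕ} (hmc : m ≤ c) (hcn : c ≤ n) {i : ℕ} (hic : i ≤ c) :
    cornerSum (permMatrix u) i c = i := by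
  induction i with
  | zero => exact cornerSum_zero_left _ c
  | succ i ih =>
    have hlt := lt_of_forall_le_apply_eq hu hmc (a := ⟨i, by omega⟩) (by simp only; omega)
    have hstep : i < n ∧ pval u (i + 1) ≤ c :=
      ⟨by omega, by rw [pval_succ u ⟨i, by omega⟩]; omega⟩
    rw [cornerSum_permMatrix_succ_left, ih (by omega), if_pos hstep]
    push_cast
    ring

theorem longestCornerSum_le_cornerSum_permMatrix (hmn : m ≤ n)
    (hu : ∀ a : Fin n, m ≤ (a : ℕ) → u a = a) (i j : ℕ) :
    longestCornerSum m n i j ≤ cornerSum (permMatrix u) i j := by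
  have hr := isPermCornerSum_cornerSum_permMatrix u
  have h_row : ∀ i ≤ m, cornerSum (permMatrix u) i m = i := fun i hi =>
    cornerSum_permMatrix_of_forall_le_apply_eq hu le_rfl hmn hi
  have h_col : ∀ j ≤ m, cornerSum (permMatrix u) m j = j := fun j hj => by
    rw [← cornerSum_permMatrix_inv]
    exact cornerSum_permMatrix_of_forall_le_apply_eq
      (inv_apply_eq_of_forall_le_apply_eq hu) le_rfl hmn hj
  have := hr.nonneg i j
  simp only [longestCornerSum]
  rcases le_or_gt i m with hi | hi
  · have := hr.mono (le_refl i) (min_le_left j m)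
    have := hr.le_add_right i (min j m) (m - min j m)
    rw [Nat.add_sub_cancel' (min_le_right j m), h_row i hi] at this
    omega
  rcases le_or_gt j m with hj | hj
  · have := hr.mono (min_le_left i m) (le_refl j)
    have := hr.le_add_left (min i m) j (m - min i m)
    rw [Nat.add_sub_cancel' (min_le_right i m), h_col j hj] at this
    omega
  · set c := min (min i j) n
    have := hr.mono (i := c) (i' := i) (j := c) (j' := j) (by omega) (by omega)
    rw [cornerSum_permMatrix_of_forall_le_apply_eq hu (by omega) (by omega) le_rfl] at this
    omega

end FixingTail

/-- Let `m ≤ n` and regard `S_m ⊆ S_n` (permutations fixing all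
points of `{m+1,...,n}`).  If `w ∈ S_n` is an upper bound in Bruhat order to
`w_1, ..., w_k ∈ S_m`, then there exists `w' ∈ S_n` fixing all points greater
than `m` (i.e. `w' ∈ S_m`) with `w_t ≤ w' ≤ w` in Bruhat order for all `t`.
(Bruhat order: `u ≤ v` iff `r_u ≥ r_v` entrywise on corner sums; positions are
1-based, so a 0-based index `a` corresponds to the point `a + 1`.) -/
theorem stmt13 {n m k : ℕ} (hmn : m ≤ n)
    (w : Equiv.Perm (Fin n)) (ws : Fin k → Equiv.Perm (Fin n))
    (hws : ∀ t : Fin k, ∀ a : Fin n, m ≤ (a : ℕ) → ws t a = a)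
    (hub : ∀ t : Fin k, ∀ a b : ℕ,
      cornerSum (permMatrix w) a b ≤ cornerSum (permMatrix (ws t)) a b) :
    ∃ w' : Equiv.Perm (Fin n),
      (∀ a : Fin n, m ≤ (a : ℕ) → w' a = a) ∧
      (∀ t : Fin k, ∀ a b : ℕ,
        cornerSum (permMatrix w') a b ≤ cornerSum (permMatrix (ws t)) a b) ∧
      (∀ a b : ℕ,
        cornerSum (permMatrix w) a b ≤ cornerSum (permMatrix w') a b) := by
  have hw := isPermCornerSum_cornerSum_permMatrix w
  obtain ⟨w', hw'⟩ := (hw.max_of_secondDiff_nonneg (isPermCornerSum_longestCornerSum hmn)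
    (hw.secondDiff_max_longestCornerSum_nonneg hmn)).exists_perm
  refine ⟨w', fun a ha => ?_, fun t i j => ?_, fun i j => ?_⟩
  · have h := hw.secondDiff_max_longestCornerSum_self hmn ha a.isLt
    rw [← hw', secondDiff_cornerSum, entry1_succ_succ] at h
    simpa [permMatrix] using h
  · rw [hw']
    exact max_le (hub t i j) (longestCornerSum_le_cornerSum_permMatrix hmn (hws t) i j)
  · rw [hw']
    exact le_max_left _ _
end

section
/- Let k be a field, M an n×n matrix over k, b_1 an invertible lower triangular n×n matrix, and b_2 an invertible upper triangular n×n matrix. Then for all 1 ≤ i,j ≤ n, rank((b_1 M b_2)_{[i],[j]}) = rank(M_{[i],[j]}). In particular, if M = b_1 w b_2 for a partial permutation matrix w, then rank(M_{[i],[j]}) = r_w(i,j) for all i,j. -/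
open scoped Classical

/-- A partial permutation matrix over a field: a 0-1 matrix with at most one
`1` in each row and each column. -/
def IsPartialPermMatrixK {K : Type*} [Field K] {n : ℕ}
    (w : Matrix (Fin n) (Fin n) K) : Prop :=
  (∀ a b : Fin n, w a b = 0 ∨ w a b = 1) ∧
  (∀ a b b' : Fin n, w a b = 1 → w a b' = 1 → b = b') ∧
  (∀ a a' b : Fin n, w a b = 1 → w a' b = 1 → a = a')

/-- The corner sum `r_w(i,j)` of a partial permutation matrix: the number of
`1`s in the first `i` rows and first `j` columns (0-based: rows `< i`,
columns `< j`). -/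
noncomputable def cornerCount {K : Type*} [Field K] {n : ℕ}
    (w : Matrix (Fin n) (Fin n) K) (i j : ℕ) : ℕ :=
  (Finset.univ.filter
    (fun p : Fin n × Fin n =>
      (p.1 : ℕ) < i ∧ (p.2 : ℕ) < j ∧ w p.1 p.2 = 1)).card


/-!
The northwest `i × j` corner of `L * M * U` is the product of the corners of `L`, `M` and `U`,
because `L` is lower and `U` is upper triangular; those corners of `L` and `U` are again
triangular with nonzero diagonal, hence invertible, so the rank is unchanged.

A partial permutation matrix `w` is a partial isometry: `wᵀ * w` is diagonal with a `1` exactly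
at the columns of `w` that contain a `1`, and `w * (wᵀ * w) = w`. Hence `rank w = rank (wᵀ * w)`
is the number of `1`s of `w`, and the corners of `w` are again partial permutation matrices.
-/

open Finset

namespace Matrix

section Triangular

variable {R : Type*} {l m : Type*} {n i j : ℕ}

theorem IsUpperTriangular.isUnit_diag [CommRing R] [Fintype m] [LinearOrder m]
    {U : Matrix m m R} (hU : U.IsUpperTriangular) (h : IsUnit U) (k : m) : IsUnit (U.diag k) := by
  rw [isUnit_iff_isUnit_det, det_of_isUpperTriangular hU, IsUnit.prod_univ_iff] at h
  exact h k

theorem IsLowerTriangular.isUnit_diag [CommRing R] [Fintype m] [LinearOrder m]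
    {L : Matrix m m R} (hL : L.IsLowerTriangular) (h : IsUnit L) (k : m) : IsUnit (L.diag k) := by
  rw [isUnit_iff_isUnit_det, det_of_isLowerTriangular L hL, IsUnit.prod_univ_iff] at h
  exact h k

theorem IsLowerTriangular.submatrix_castLE [Zero R] {L : Matrix (Fin n) (Fin n) R}
    (hL : L.IsLowerTriangular) (hi : i ≤ n) :
    (L.submatrix (Fin.castLE hi) (Fin.castLE hi)).IsLowerTriangular :=
  fun _ _ hab => hL hab

theorem submatrix_castLE_mul_of_isLowerTriangular [NonUnitalNonAssocSemiring R]
    {L : Matrix (Fin n) (Fin n) R} (hL : L.IsLowerTriangular) (M : Matrix (Fin n) m R)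
    (c : l → m) (hi : i ≤ n) :
    (L * M).submatrix (Fin.castLE hi) c =
      L.submatrix (Fin.castLE hi) (Fin.castLE hi) * M.submatrix (Fin.castLE hi) c := by
  ext a b
  refine (Fintype.sum_of_injective (Fin.castLE hi) (Fin.castLE_injective hi) _ _ ?_
    fun _ => rfl).symm
  rintro k hk
  have hak : Fin.castLE hi a < k := by
    by_contra! hka
    exact hk ⟨⟨k, Nat.lt_of_le_of_lt hka a.isLt⟩, rfl⟩
  exact mul_eq_zero_of_left (hL hak) _

theorem rank_submatrix_castLE_mul_of_isLowerTriangular [CommRing R] [IsDomain R] [Fintype l]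
    {L : Matrix (Fin n) (Fin n) R} (hL : L.IsLowerTriangular) (hd : ∀ k, L.diag k ≠ 0)
    (M : Matrix (Fin n) m R) (c : l → m) (hi : i ≤ n) :
    ((L * M).submatrix (Fin.castLE hi) c).rank = (M.submatrix (Fin.castLE hi) c).rank := by
  rw [submatrix_castLE_mul_of_isLowerTriangular hL M c hi,
    rank_mul_eq_right_of_isLowerTriangular _ _ (hL.submatrix_castLE hi) fun k => hd _]

theorem rank_submatrix_castLE_mul_of_isUpperTriangular [Field R] [Fintype l]
    {U : Matrix (Fin n) (Fin n) R} (hU : U.IsUpperTriangular) (hd : ∀ k, U.diag k ≠ 0)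
    (M : Matrix m (Fin n) R) (r : l → m) (hj : j ≤ n) :
    ((M * U).submatrix r (Fin.castLE hj)).rank = (M.submatrix r (Fin.castLE hj)).rank := by
  have hUt : Uᵀ.IsLowerTriangular := fun _ _ hab => hU hab
  rw [← rank_transpose, transpose_submatrix, transpose_mul,
    rank_submatrix_castLE_mul_of_isLowerTriangular hUt hd, ← transpose_submatrix, rank_transpose]

theorem rank_submatrix_castLE_mul_mul [Field R] {L U : Matrix (Fin n) (Fin n) R}
    (hL : L.IsLowerTriangular) (hLd : ∀ k, L.diag k ≠ 0)
    (hU : U.IsUpperTriangular) (hUd : ∀ k, U.diag k ≠ 0)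
    (M : Matrix (Fin n) (Fin n) R) (hi : i ≤ n) (hj : j ≤ n) :
    ((L * M * U).submatrix (Fin.castLE hi) (Fin.castLE hj)).rank =
      (M.submatrix (Fin.castLE hi) (Fin.castLE hj)).rank := by
  rw [rank_submatrix_castLE_mul_of_isUpperTriangular hU hUd,
    rank_submatrix_castLE_mul_of_isLowerTriangular hL hLd]

end Triangular

structure IsPartialPerm {K m n : Type*} [Zero K] [One K] (A : Matrix m n K) : Prop where
  zero_or_one : ∀ a b, A a b = 0 ∨ A a b = 1
  col_unique : ∀ a b b', A a b = 1 → A a b' = 1 → b = b'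
  row_unique : ∀ a a' b, A a b = 1 → A a' b = 1 → a = a'

namespace IsPartialPerm

variable {K : Type*} {l m n o : Type*}

section ZeroOne

variable [Zero K] [One K] {A : Matrix m n K}

theorem submatrix (hA : A.IsPartialPerm) {r : l → m} {c : o → n} (hr : r.Injective)
    (hc : c.Injective) : (A.submatrix r c).IsPartialPerm where
  zero_or_one _ _ := hA.zero_or_one _ _
  col_unique _ _ _ h h' := hc (hA.col_unique _ _ _ h h')
  row_unique _ _ _ h h' := hr (hA.row_unique _ _ _ h h')

theorem eq_zero_of_ne_one (hA : A.IsPartialPerm) {a : m} {b : n} (h : A a b ≠ 1) : A a b = 0 :=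
  (hA.zero_or_one a b).resolve_right h

theorem card_cols_with_one_eq_card_ones (hA : A.IsPartialPerm) [Fintype m] [Fintype n] :
    Fintype.card {b // ∃ a, A a b = 1} = #{p : m × n | A p.1 p.2 = 1} := by
  rw [← Fintype.card_subtype]
  refine (Fintype.card_congr (Equiv.ofBijective (fun p => ⟨p.1.2, p.1.1, p.2⟩) ⟨?_, ?_⟩)).symm
  · rintro ⟨⟨a, b⟩, h⟩ ⟨⟨a', b'⟩, h'⟩ hbb'
    obtain rfl : b = b' := congrArg Subtype.val hbb'
    obtain rfl : a = a' := hA.row_unique _ _ _ h h'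
    rfl
  · rintro ⟨b, a, h⟩
    exact ⟨⟨(a, b), h⟩, rfl⟩

end ZeroOne

section Semiring

variable [Semiring K] [Fintype m] [DecidableEq n] {A : Matrix m n K}

theorem transpose_mul_self (hA : A.IsPartialPerm) :
    Aᵀ * A = diagonal fun b => if ∃ a, A a b = 1 then 1 else 0 := by
  ext b b'
  simp only [mul_apply, transpose_apply, diagonal_apply]
  split_ifs with hbb' hcol
  · subst hbb'
    obtain ⟨a, ha⟩ := hcol
    refine (Finset.sum_eq_single a (fun a' _ ha' => ?_) (by simp)).trans (by rw [ha, mul_one])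
    rw [hA.eq_zero_of_ne_one fun h => ha' (hA.row_unique _ _ _ h ha), zero_mul]
  · subst hbb'
    simp only [not_exists] at hcol
    exact Finset.sum_eq_zero fun a _ => by rw [hA.eq_zero_of_ne_one (hcol a), zero_mul]
  · refine Finset.sum_eq_zero fun a _ => ?_
    rcases hA.zero_or_one a b with h | h
    · rw [h, zero_mul]
    · rw [hA.eq_zero_of_ne_one fun h' => hbb' (hA.col_unique _ _ _ h h'), mul_zero]

theorem mul_transpose_mul_self [Fintype n] (hA : A.IsPartialPerm) : A * (Aᵀ * A) = A := by
  ext a b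
  rw [hA.transpose_mul_self, mul_diagonal]
  rcases hA.zero_or_one a b with h | h
  · rw [h, zero_mul]
  · rw [if_pos ⟨a, h⟩, mul_one]

end Semiring

theorem rank_eq_card_ones [Field K] [Fintype m] [Fintype n] {A : Matrix m n K}
    (hA : A.IsPartialPerm) : A.rank = #{p : m × n | A p.1 p.2 = 1} := by
  have hrank : A.rank = (Aᵀ * A).rank := by
    refine le_antisymm ?_ (rank_mul_le_right _ _)
    calc A.rank = (A * (Aᵀ * A)).rank := by rw [hA.mul_transpose_mul_self]
      _ ≤ (Aᵀ * A).rank := rank_mul_le_right _ _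
  rw [hrank, hA.transpose_mul_self, rank_diagonal, ← hA.card_cols_with_one_eq_card_ones]
  exact Fintype.card_congr (Equiv.subtypeEquivRight fun b => by split_ifs with h <;> simp [h])

end IsPartialPerm

end Matrix

theorem IsPartialPermMatrixK.isPartialPerm {K : Type*} [Field K] {n : ℕ}
    {w : Matrix (Fin n) (Fin n) K} (hw : IsPartialPermMatrixK w) : w.IsPartialPerm :=
  ⟨hw.1, hw.2.1, hw.2.2⟩

theorem cornerCount_eq_card_ones_submatrix {K : Type*} [Field K] {n i j : ℕ}
    (w : Matrix (Fin n) (Fin n) K) (hi : i ≤ n) (hj : j ≤ n) :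
    cornerCount w i j = #{p : Fin i × Fin j | w (Fin.castLE hi p.1) (Fin.castLE hj p.2) = 1} := by
  symm
  refine Finset.card_bij (fun p _ => (Fin.castLE hi p.1, Fin.castLE hj p.2)) ?_ ?_ ?_
  · rintro ⟨a, b⟩ h
    simp only [Finset.mem_filter, Finset.mem_univ, true_and] at h ⊢
    exact ⟨a.isLt, b.isLt, h⟩
  · rintro ⟨a, b⟩ _ ⟨a', b'⟩ _ h
    simpa [Prod.ext_iff, Fin.ext_iff] using h
  · rintro ⟨a, b⟩ h
    simp only [Finset.mem_filter, Finset.mem_univ, true_and] at h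
    exact ⟨(⟨a, h.1⟩, ⟨b, h.2.1⟩), by simpa using h.2.2, rfl⟩

/-- Multiplication on the left by an invertible lower triangular
matrix and on the right by an invertible upper triangular matrix preserves the
ranks of all northwest submatrices; in particular if `M = b₁ w b₂` for a
partial permutation matrix `w`, then `rank M_{[i],[j]} = r_w(i,j)`. -/
theorem stmt15 {K : Type*} [Field K] {n : ℕ}
    (M b₁ b₂ : Matrix (Fin n) (Fin n) K)
    (hb₁ : IsUnit b₁) (hb₁tri : ∀ a b : Fin n, a < b → b₁ a b = 0)
    (hb₂ : IsUnit b₂) (hb₂tri : ∀ a b : Fin n, b < a → b₂ a b = 0) :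
    (∀ (i j : ℕ) (hi : i ≤ n) (hj : j ≤ n),
      ((b₁ * M * b₂).submatrix (Fin.castLE hi) (Fin.castLE hj)).rank =
        (M.submatrix (Fin.castLE hi) (Fin.castLE hj)).rank) ∧
    (∀ w : Matrix (Fin n) (Fin n) K, IsPartialPermMatrixK w →
      M = b₁ * w * b₂ →
      ∀ (i j : ℕ) (hi : i ≤ n) (hj : j ≤ n),
        (M.submatrix (Fin.castLE hi) (Fin.castLE hj)).rank =
          cornerCount w i j) := by
  have hL : b₁.IsLowerTriangular := fun a b h => hb₁tri a b h
  have hU : b₂.IsUpperTriangular := fun a b h => hb₂tri a b h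
  have key (N : Matrix (Fin n) (Fin n) K) {i j : ℕ} (hi : i ≤ n) (hj : j ≤ n) :=
    Matrix.rank_submatrix_castLE_mul_mul hL (fun k => (hL.isUnit_diag hb₁ k).ne_zero)
      hU (fun k => (hU.isUnit_diag hb₂ k).ne_zero) N hi hj
  refine ⟨fun i j hi hj => key M hi hj, ?_⟩
  rintro w hw rfl i j hi hj
  rw [key w hi hj, cornerCount_eq_card_ones_submatrix w hi hj]
  exact (hw.isPartialPerm.submatrix (Fin.castLE_injective hi)
    (Fin.castLE_injective hj)).rank_eq_card_ones
end

section
/- Let k be an algebraically closed field and A ∈ ASM(n). Then X_A is the union of the matrix Schubert varieties of permutations above A: an n×n matrix M over k satisfies rank(M_{[i],[j]}) ≤ r_A(i,j) for all 1 ≤ i,j ≤ n if and only if there exists a permutation w ∈ S_n with r_w(i,j) ≤ r_A(i,j) for all i,j (i.e. w ≥ A) and rank(M_{[i],[j]}) ≤ r_w(i,j) for all i,j (i.e. M ∈ X_w). -/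
/-!
Write `F i j` for the rank of the top-left `i × j` corner of `M`. As a function of `(i, j)` it
vanishes in row `0`, grows by at most one from each row to the next, and is supermodular; the
corner sums `R = r_A` of an ASM vanish in column `0`, grow by at most one from each column to the
next, and equal `k` in the last column. If `F ≤ R`, a permutation `w` with `F ≤ r_w ≤ R` is built
greedily: row `m + 1` receives the largest value not used so far that does not exceed the first
column in which `F` grows from row `m` to row `m + 1`. What keeps the construction going is that,
for every later row `k`, the number of chosen values `≤ j` never exceeds `F m j + (R k j - F k j)`;
supermodularity of `F` together with the column bound on `R` shows that an admissible unused value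
always exists.
-/

open Finset Function Submodule Module

structure IsCornerRankFunction (F : ℕ → ℕ → ℤ) : Prop where
  zero_left : ∀ j, F 0 j = 0
  le_succ : ∀ i j, F i j ≤ F (i + 1) j
  succ_le : ∀ i j, F (i + 1) j ≤ F i j + 1
  succ_sub_mono : ∀ i {t j}, t ≤ j → F (i + 1) t - F i t ≤ F (i + 1) j - F i j

namespace IsCornerRankFunction

variable {F : ℕ → ℕ → ℤ} (hF : IsCornerRankFunction F)
include hF

theorem le_add_sub {i k : ℕ} (hik : i ≤ k) (j : ℕ) : F k j ≤ F i j + (k - i) := by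
  induction k, hik using Nat.le_induction with
  | base => simp
  | succ k _ ih => have := hF.succ_le k j; push_cast; omega

theorem sub_mono {i k t j : ℕ} (hik : i ≤ k) (htj : t ≤ j) :
    F k t - F i t ≤ F k j - F i j := by
  induction k, hik using Nat.le_induction with
  | base => simp
  | succ k _ ih => have := hF.succ_sub_mono k htj; omega

end IsCornerRankFunction

section Truncation

variable {K : Type*} [Semiring K] {n : ℕ}

def truncation (j : ℕ) : (Fin n → K) →ₗ[K] Fin n → K :=
  LinearMap.pi fun l => if (l : ℕ) < j then LinearMap.proj l else 0

theorem truncation_apply (j : ℕ) (x : Fin n → K) (l : Fin n) :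
    truncation j x l = if (l : ℕ) < j then x l else 0 := by
  unfold truncation; split_ifs <;> simp [*]

theorem truncation_truncation {t j : ℕ} (h : t ≤ j) (x : Fin n → K) :
    truncation t (truncation (K := K) j x) = truncation t x := by
  ext l
  simp only [truncation_apply]
  split_ifs <;> first | rfl | omega

end Truncation

namespace Matrix

variable {K : Type*} [Field K] {n : ℕ} (M : Matrix (Fin n) (Fin n) K)

/-- Rows are truncated by zeroing the coordinates `≥ j` rather than by restriction, so that all
corners live in `Fin n → K` and `i`, `j` range over all of `ℕ`. -/
def cornerRows (i j : ℕ) : Set (Fin n → K) :=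
  (fun k => truncation j (M k)) '' {k | (k : ℕ) < i}

noncomputable def cornerRank (i j : ℕ) : ℕ :=
  finrank K (span K (M.cornerRows i j))

theorem cornerRank_zero_left (j : ℕ) : M.cornerRank 0 j = 0 := by
  have : {k : Fin n | (k : ℕ) < 0} = ∅ := by ext k; simp
  rw [cornerRank, cornerRows, this, Set.image_empty, span_empty, finrank_bot]

theorem cornerRows_succ {i : ℕ} (h : i < n) (j : ℕ) :
    M.cornerRows (i + 1) j = insert (truncation j (M ⟨i, h⟩)) (M.cornerRows i j) := by
  have : {k : Fin n | (k : ℕ) < i + 1} = insert (⟨i, h⟩ : Fin n) {k : Fin n | (k : ℕ) < i} := by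
    ext k
    simp only [Set.mem_insert_iff, Set.mem_ofPred_eq, Fin.ext_iff]
    omega
  rw [cornerRows, this, Set.image_insert_eq]; rfl

theorem cornerRows_succ_of_le {i : ℕ} (h : n ≤ i) (j : ℕ) :
    M.cornerRows (i + 1) j = M.cornerRows i j := by
  have : {k : Fin n | (k : ℕ) < i + 1} = {k : Fin n | (k : ℕ) < i} := by
    ext k; simp only [Set.mem_ofPred_eq]; omega
  rw [cornerRows, this]; rfl

theorem cornerRank_succ_of_le {i : ℕ} (h : n ≤ i) (j : ℕ) :
    M.cornerRank (i + 1) j = M.cornerRank i j := by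
  rw [cornerRank, M.cornerRows_succ_of_le h, cornerRank]

theorem cornerRank_succ_of_mem {i j : ℕ} (h : i < n)
    (hx : truncation j (M ⟨i, h⟩) ∈ span K (M.cornerRows i j)) :
    M.cornerRank (i + 1) j = M.cornerRank i j := by
  rw [cornerRank, M.cornerRows_succ h, span_insert_eq_span hx, cornerRank]

theorem cornerRank_succ_of_notMem {i j : ℕ} (h : i < n)
    (hx : truncation j (M ⟨i, h⟩) ∉ span K (M.cornerRows i j)) :
    M.cornerRank (i + 1) j = M.cornerRank i j + 1 := by
  rw [cornerRank, M.cornerRows_succ h, span_insert, sup_comm, finrank_sup_span_singleton hx,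
    cornerRank]

theorem truncation_mem_span_cornerRows_of_le {i t j : ℕ} (htj : t ≤ j) {x : Fin n → K}
    (hx : truncation j x ∈ span K (M.cornerRows i j)) :
    truncation t x ∈ span K (M.cornerRows i t) := by
  have himage : truncation t '' M.cornerRows i j = M.cornerRows i t := by
    rw [cornerRows, cornerRows, Set.image_image]
    simp only [truncation_truncation htj]
  rw [← truncation_truncation htj, ← himage, ← map_span]
  exact mem_map_of_mem hx

theorem isCornerRankFunction_cornerRank :
    IsCornerRankFunction fun i j => (M.cornerRank i j : ℤ) := by
  have step : ∀ i j, M.cornerRank (i + 1) j = M.cornerRank i j ∨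
      M.cornerRank (i + 1) j = M.cornerRank i j + 1 := by
    intro i j
    rcases lt_or_ge i n with h | h
    · by_cases hx : truncation j (M ⟨i, h⟩) ∈ span K (M.cornerRows i j)
      · exact .inl (M.cornerRank_succ_of_mem h hx)
      · exact .inr (M.cornerRank_succ_of_notMem h hx)
    · exact .inl (M.cornerRank_succ_of_le h j)
  refine ⟨fun j => by simp [cornerRank_zero_left], fun i j => ?_, fun i j => ?_,
    fun i t j htj => ?_⟩
  · rcases step i j with h | h <;> omega
  · rcases step i j with h | h <;> omega
  · rcases lt_or_ge i n with h | h
    · by_cases hx : truncation t (M ⟨i, h⟩) ∈ span K (M.cornerRows i t)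
      · rw [M.cornerRank_succ_of_mem h hx]
        rcases step i j with h | h <;> omega
      · have hx' : truncation j (M ⟨i, h⟩) ∉ span K (M.cornerRows i j) :=
          fun hmem => hx (M.truncation_mem_span_cornerRows_of_le htj hmem)
        rw [M.cornerRank_succ_of_notMem h hx, M.cornerRank_succ_of_notMem h hx']
        omega
    · rw [M.cornerRank_succ_of_le h, M.cornerRank_succ_of_le h]
      omega

theorem rank_submatrix_castLE {i j : ℕ} (hi : i ≤ n) (hj : j ≤ n) :
    (M.submatrix (Fin.castLE hi) (Fin.castLE hj)).rank = M.cornerRank i j := by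
  set E := ExtendByZero.linearMap K (Fin.castLE hj)
  have hE : Injective E := extend_injective (Fin.castLE_injective hj) 0
  have hrow (a : Fin i) :
      E (M (Fin.castLE hi a) ∘ Fin.castLE hj) = truncation j (M (Fin.castLE hi a)) := by
    ext l
    rw [ExtendByZero.linearMap_apply, truncation_apply]
    split_ifs with hl
    · exact (Fin.castLE_injective hj).extend_apply _ _ ⟨l, hl⟩
    · refine extend_apply' _ _ _ ?_
      rintro ⟨b, rfl⟩
      exact hl b.isLt
  have himage : E '' Set.range (M.submatrix (Fin.castLE hi) (Fin.castLE hj)).row =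
      M.cornerRows i j := by
    rw [← Set.range_comp, cornerRows, ← Fin.range_castLE hi, ← Set.range_comp]
    exact congrArg Set.range (funext hrow)
  rw [rank_eq_finrank_span_row, (equivMapOfInjective E hE _).finrank_eq, map_span, himage,
    cornerRank]

end Matrix

structure IsCornerSumBound (n : ℕ) (R : ℕ → ℕ → ℤ) : Prop where
  zero_right : ∀ k, R k 0 = 0
  sub_le : ∀ k {t j}, t ≤ j → R k j - R k t ≤ j - t
  last_column : ∀ k, 1 ≤ k → k ≤ n → R k n = k

theorem cornerSum_succ_right {n : ℕ} (A : Matrix (Fin n) (Fin n) ℤ) (i j : ℕ) :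
    cornerSum A i (j + 1) = cornerSum A i j + colPartial A i (j + 1) := by
  simp only [cornerSum, colPartial, sum_Icc_succ_top (Nat.le_add_left 1 j), sum_add_distrib]

theorem isCornerSumBound_cornerSum {n : ℕ} {A : Matrix (Fin n) (Fin n) ℤ} (hA : IsASM A) :
    IsCornerSumBound n (cornerSum A) where
  zero_right k := by simp [cornerSum]
  sub_le k t j htj := by
    induction j, htj using Nat.le_induction with
    | base => simp
    | succ j _ ih =>
      rw [cornerSum_succ_right]
      rcases hA.2.1 k (j + 1) with h | h <;> push_cast <;> omega
  last_column k hk1 hkn := by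
    change ∑ x ∈ Icc 1 k, rowPartial A x n = k
    rw [sum_congr rfl fun x hx => hA.2.2.1 x (mem_Icc.1 hx).1 ((mem_Icc.1 hx).2.trans hkn)]
    simp

def countLE (w : ℕ → ℕ) (i j : ℕ) : ℕ := #{k ∈ Icc 1 i | w k ≤ j}

theorem countLE_congr {w w' : ℕ → ℕ} {i : ℕ} (h : Set.EqOn w w' (Set.Icc 1 i)) (j : ℕ) :
    countLE w i j = countLE w' i j := by
  unfold countLE
  congr 1
  exact filter_congr fun k hk => by rw [h (by simpa using hk)]

theorem countLE_zero_left (w : ℕ → ℕ) (j : ℕ) : countLE w 0 j = 0 := by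
  simp [countLE]

theorem countLE_update_succ (w : ℕ → ℕ) (i x j : ℕ) :
    countLE (update w (i + 1) x) (i + 1) j = countLE w i j + if x ≤ j then 1 else 0 := by
  have hold : countLE (update w (i + 1) x) i j = countLE w i j :=
    countLE_congr (fun k hk => update_of_ne (by have := hk.2; omega) _ _) j
  rw [← hold, countLE, countLE, ← insert_Icc_right_eq_Icc_add_one (by omega), filter_insert,
    update_self]
  split_ifs with h
  · rw [card_insert_of_notMem (by simp)]
  · rfl

theorem countLE_eq_of_le {w : ℕ → ℕ} {i j : ℕ} (h : ∀ k ∈ Icc 1 i, w k ≤ j) :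
    countLE w i j = i := by
  rw [countLE, filter_true_of_mem h, Nat.card_Icc, Nat.add_sub_cancel]

theorem countLE_add_le {w : ℕ → ℕ} {i t p : ℕ} (htp : t ≤ p)
    (hused : ∀ v ∈ Ioc t p, ∃ k ∈ Set.Icc 1 i, w k = v) :
    countLE w i t + (p - t) ≤ countLE w i p := by
  have hdisj : Disjoint {k ∈ Icc 1 i | w k ≤ t} {k ∈ Icc 1 i | t < w k ∧ w k ≤ p} :=
    disjoint_filter.2 fun _ _ h h' => by omega
  have hsurj : Ioc t p ⊆ {k ∈ Icc 1 i | t < w k ∧ w k ≤ p}.image w := by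
    intro v hv
    obtain ⟨k, hk, rfl⟩ := hused v hv
    exact mem_image_of_mem w (mem_filter.2 ⟨by simpa using hk, mem_Ioc.1 hv⟩)
  calc countLE w i t + (p - t)
      ≤ #{k ∈ Icc 1 i | w k ≤ t} + #{k ∈ Icc 1 i | t < w k ∧ w k ≤ p} := by
        rw [countLE, ← Nat.card_Ioc]
        exact Nat.add_le_add_left ((card_le_card hsurj).trans card_image_le) _
    _ = #({k ∈ Icc 1 i | w k ≤ t} ∪ {k ∈ Icc 1 i | t < w k ∧ w k ≤ p}) :=
        (card_union_of_disjoint hdisj).symm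
    _ ≤ countLE w i p := card_le_card fun k hk => by
        simp only [mem_union, mem_filter] at hk ⊢
        rcases hk with ⟨hk, h⟩ | ⟨hk, -, h⟩ <;> exact ⟨hk, by omega⟩

structure IsAdmissiblePrefix (n : ℕ) (F R : ℕ → ℕ → ℤ) (w : ℕ → ℕ) (i : ℕ) : Prop where
  mapsTo : Set.MapsTo w (Set.Icc 1 i) (Set.Icc 1 n)
  injOn : Set.InjOn w (Set.Icc 1 i)
  le_countLE : ∀ j, 1 ≤ j → j ≤ n → F i j ≤ countLE w i j
  countLE_le : ∀ j k, 1 ≤ j → j ≤ n → i ≤ k → 1 ≤ k → k ≤ n →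
    countLE w i j ≤ F i j + (R k j - F k j)

/-- The value given to row `m + 1` has to exceed every tight column `j`: one where, for some later
row `k`, the count in row `m` already reaches `F (m + 1) j + (R k j - F k j)`. -/
def IsSlackFrom (n : ℕ) (F R : ℕ → ℕ → ℤ) (w : ℕ → ℕ) (m x : ℕ) : Prop :=
  ∀ j k, x ≤ j → j ≤ n → m + 1 ≤ k → k ≤ n → countLE w m j < F (m + 1) j + (R k j - F k j)

namespace IsAdmissiblePrefix

variable {n : ℕ} {F R : ℕ → ℕ → ℤ} {w : ℕ → ℕ} {m : ℕ}

theorem congr {w' : ℕ → ℕ} (hw : IsAdmissiblePrefix n F R w m) (h : Set.EqOn w w' (Set.Icc 1 m)) :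
    IsAdmissiblePrefix n F R w' m where
  mapsTo := hw.mapsTo.congr h
  injOn := hw.injOn.congr h
  le_countLE j hj1 hjn := countLE_congr h j ▸ hw.le_countLE j hj1 hjn
  countLE_le j k hj1 hjn hmk hk1 hkn := countLE_congr h j ▸ hw.countLE_le j k hj1 hjn hmk hk1 hkn

theorem countLE_le_self (hw : IsAdmissiblePrefix n F R w m) {j : ℕ} (hm1 : 1 ≤ m) (hmn : m ≤ n)
    (hj1 : 1 ≤ j) (hjn : j ≤ n) : countLE w m j ≤ R m j := by
  have := hw.countLE_le j m hj1 hjn le_rfl hm1 hmn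
  omega

theorem zero (hF : IsCornerRankFunction F)
    (hFR : ∀ i j, 1 ≤ i → i ≤ n → 1 ≤ j → j ≤ n → F i j ≤ R i j) :
    IsAdmissiblePrefix n F R w 0 where
  mapsTo k hk := absurd hk.2 (by have := hk.1; omega)
  injOn k hk := absurd hk.2 (by have := hk.1; omega)
  le_countLE j _ _ := by simp [countLE_zero_left, hF.zero_left]
  countLE_le j k hj1 hjn _ hk1 hkn := by
    simp [countLE_zero_left, hF.zero_left, hFR k j hk1 hkn hj1 hjn]

theorem update_succ (hF : IsCornerRankFunction F) (hw : IsAdmissiblePrefix n F R w m)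
    {x : ℕ} (hx1 : 1 ≤ x) (hxn : x ≤ n) (hfresh : ∀ k ∈ Set.Icc 1 m, w k ≠ x)
    (hflat : ∀ j, 1 ≤ j → j < x → F (m + 1) j ≤ F m j)
    (hslack : IsSlackFrom n F R w m x) :
    IsAdmissiblePrefix n F R (update w (m + 1) x) (m + 1) := by
  have hold : Set.EqOn w (update w (m + 1) x) (Set.Icc 1 m) := fun k hk =>
    (update_of_ne (by have := hk.2; omega) _ _).symm
  have hnew : update w (m + 1) x (m + 1) = x := update_self _ _ _
  have hIcc : Set.Icc 1 (m + 1) = insert (m + 1) (Set.Icc 1 m) :=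
    (Set.insert_Icc_right_eq_Icc_add_one (by omega)).symm
  have hnotMem : m + 1 ∉ Set.Icc 1 m := by simp
  refine ⟨?_, ?_, fun j hj1 hjn => ?_, fun j k hj1 hjn hmk hk1 hkn => ?_⟩
  · rw [hIcc]
    rintro k (rfl | hk)
    · rw [hnew]; exact ⟨hx1, hxn⟩
    · exact hw.mapsTo.congr hold hk
  · rw [hIcc, Set.injOn_insert hnotMem, hnew, ← hold.image_eq]
    exact ⟨hw.injOn.congr hold, fun ⟨k, hk, hkx⟩ => hfresh k hk hkx⟩
  · have h1 := hF.le_succ m j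
    have h2 := hF.succ_le m j
    have := hw.le_countLE j hj1 hjn
    rw [countLE_update_succ]
    split_ifs with hxj
    · omega
    · have := hflat j hj1 (by omega); omega
  · have h1 := hF.le_succ m j
    have := hw.countLE_le j k hj1 hjn (by omega) hk1 hkn
    rw [countLE_update_succ]
    split_ifs with hxj
    · have := hslack j k hxj hjn hmk hkn; omega
    · omega


theorem exists_jump_column (hF : IsCornerRankFunction F) (hR : IsCornerSumBound n R)
    (hw : IsAdmissiblePrefix n F R w m) (hm : m < n) :
    ∃ p, 1 ≤ p ∧ p ≤ n ∧ (∀ j, 1 ≤ j → j < p → F (m + 1) j ≤ F m j) ∧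
      IsSlackFrom n F R w m p := by
  classical
  by_cases hjump : ∃ j, 1 ≤ j ∧ j ≤ n ∧ F m j < F (m + 1) j
  · obtain ⟨hp1, hpn, hpjump⟩ := Nat.find_spec hjump
    refine ⟨Nat.find hjump, hp1, hpn, fun j hj1 hjp => ?_, fun j k hpj hjn hmk hkn => ?_⟩
    · have := Nat.find_min hjump hjp
      push Not at this
      exact this hj1 (by omega)
    · have := hF.succ_sub_mono m hpj
      have := hF.succ_le m j
      have := hw.countLE_le j k (by omega) hjn (by omega) (by omega) hkn
      omega
  · push Not at hjump
    refine ⟨n, by omega, le_rfl, fun j hj1 hjn => hjump j hj1 hjn.le,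
      fun j k hnj hjn hmk hkn => ?_⟩
    obtain rfl : j = n := le_antisymm hjn hnj
    have hcount : countLE w m j = m :=
      countLE_eq_of_le fun k hk => (hw.mapsTo (by simpa using hk)).2
    have := hF.le_add_sub hmk j
    rw [hcount, hR.last_column k (by omega) hkn]
    push_cast at this ⊢
    omega

theorem exists_admissible_value (hF : IsCornerRankFunction F) (hR : IsCornerSumBound n R)
    (hw : IsAdmissiblePrefix n F R w m) (hm : m < n) :
    ∃ x, 1 ≤ x ∧ x ≤ n ∧ (∀ k ∈ Set.Icc 1 m, w k ≠ x) ∧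
      (∀ j, 1 ≤ j → j < x → F (m + 1) j ≤ F m j) ∧ IsSlackFrom n F R w m x := by
  classical
  obtain ⟨p, hp1, hpn, hflat, hslack⟩ := hw.exists_jump_column hF hR hm
  set S := {v ∈ Icc 1 p | ∀ k ∈ Set.Icc 1 m, w k ≠ v}
  have hused : ∀ v ∈ Icc 1 p, v ∉ S → ∃ k ∈ Set.Icc 1 m, w k = v := by
    intro v hv hvS
    simp only [S, mem_filter, not_and, not_forall, not_not, exists_prop] at hvS
    exact hvS hv
  have hS : S.Nonempty := by
    by_contra hS
    have hgap := countLE_add_le (w := w) (i := m) (Nat.zero_le p) fun v hv => by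
      obtain ⟨hv0, hvp⟩ := mem_Ioc.1 hv
      exact hused v (mem_Icc.2 ⟨by omega, hvp⟩) fun hvS => hS ⟨v, hvS⟩
    have := hslack p (m + 1) le_rfl hpn le_rfl hm
    have := hR.sub_le (m + 1) (Nat.zero_le p)
    rw [hR.zero_right] at this
    omega
  obtain ⟨x, hxS, hxmax⟩ := S.exists_max_image id hS
  obtain ⟨hx, hfresh⟩ := mem_filter.1 hxS
  obtain ⟨hx1, hxp⟩ := mem_Icc.1 hx
  refine ⟨x, hx1, hxp.trans hpn, hfresh, fun j hj1 hjx => hflat j hj1 (by omega),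
    fun t k hxt htn hmk hkn => ?_⟩
  by_contra htight
  push Not at htight
  have htp : t < p := by
    by_contra!
    exact htight.not_gt (hslack t k this htn hmk hkn)
  have hgap := countLE_add_le (w := w) (i := m) htp.le fun v hv => by
    obtain ⟨htv, hvp⟩ := mem_Ioc.1 hv
    exact hused v (mem_Icc.2 ⟨by omega, hvp⟩) fun hvS => by have : v ≤ x := hxmax v hvS; omega
  have := hslack p k le_rfl hpn hmk hkn
  have := hF.sub_mono hmk htp.le
  have := hR.sub_le k htp.le
  omega

theorem exists_update_succ (hF : IsCornerRankFunction F) (hR : IsCornerSumBound n R)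
    (hw : IsAdmissiblePrefix n F R w m) (hm : m < n) :
    ∃ x, IsAdmissiblePrefix n F R (update w (m + 1) x) (m + 1) := by
  obtain ⟨x, hx1, hxn, hfresh, hflat, hslack⟩ := hw.exists_admissible_value hF hR hm
  exact ⟨x, hw.update_succ hF hx1 hxn hfresh hflat hslack⟩

end IsAdmissiblePrefix

theorem exists_forall_isAdmissiblePrefix {n : ℕ} {F R : ℕ → ℕ → ℤ}
    (hF : IsCornerRankFunction F) (hR : IsCornerSumBound n R)
    (hFR : ∀ i j, 1 ≤ i → i ≤ n → 1 ≤ j → j ≤ n → F i j ≤ R i j) :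
    ∃ w, ∀ i ≤ n, IsAdmissiblePrefix n F R w i := by
  suffices ∀ m ≤ n, ∃ w, ∀ i ≤ m, IsAdmissiblePrefix n F R w i from this n le_rfl
  intro m
  induction m with
  | zero => exact fun _ => ⟨id, fun i hi => (Nat.le_zero.1 hi) ▸ .zero hF hFR⟩
  | succ m ih =>
    intro hm
    obtain ⟨w, hw⟩ := ih (by omega)
    obtain ⟨x, hx⟩ := (hw m le_rfl).exists_update_succ hF hR hm
    refine ⟨update w (m + 1) x, fun i hi => ?_⟩
    rcases Nat.lt_or_eq_of_le hi with hi | rfl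
    · exact (hw i (by omega)).congr fun k hk => (update_of_ne (by have := hk.2; omega) _ _).symm
    · exact hx

section Permutation

variable {n : ℕ}

theorem pval_mem_Icc_s16 (σ : Equiv.Perm (Fin n)) {k : ℕ} (hk1 : 1 ≤ k) (hkn : k ≤ n) :
    1 ≤ pval σ k ∧ pval σ k ≤ n := by
  rw [pval, dif_pos ⟨hk1, hkn⟩]
  omega

theorem entry1_permMatrix_s16 (σ : Equiv.Perm (Fin n)) {k : ℕ} (hk1 : 1 ≤ k) (hkn : k ≤ n) (l : ℕ) :
    entry1 (permMatrix σ) k l = if pval σ k = l then 1 else 0 := by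
  by_cases hl : 1 ≤ l ∧ l ≤ n
  · rw [entry1, dif_pos ⟨hk1, hkn, hl⟩, permMatrix, Matrix.of_apply, pval, dif_pos ⟨hk1, hkn⟩]
    refine if_congr ?_ rfl rfl
    simp only [Fin.ext_iff]
    omega
  · have := pval_mem_Icc_s16 σ hk1 hkn
    rw [entry1, dif_neg (by omega), if_neg (by omega)]

theorem cornerSum_permMatrix (σ : Equiv.Perm (Fin n)) {i : ℕ} (hi : i ≤ n) (j : ℕ) :
    cornerSum (permMatrix σ) i j = countLE (pval σ) i j := by
  rw [countLE, ← sum_boole]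
  refine sum_congr rfl fun k hk => ?_
  obtain ⟨hk1, hki⟩ := mem_Icc.1 hk
  have hσk := pval_mem_Icc_s16 σ hk1 (hki.trans hi)
  rw [sum_congr rfl fun l _ => entry1_permMatrix_s16 σ hk1 (hki.trans hi) l, sum_ite_eq]
  exact if_congr (by simp only [mem_Icc]; omega) rfl rfl

theorem exists_perm_pval_eqOn {w : ℕ → ℕ} (hmaps : Set.MapsTo w (Set.Icc 1 n) (Set.Icc 1 n))
    (hinj : Set.InjOn w (Set.Icc 1 n)) :
    ∃ σ : Equiv.Perm (Fin n), Set.EqOn (pval σ) w (Set.Icc 1 n) := by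
  have hw : ∀ a : Fin n, 1 ≤ w (a + 1) ∧ w (a + 1) ≤ n := fun a => hmaps ⟨by omega, a.isLt⟩
  let f : Fin n → Fin n := fun a => ⟨w (a + 1) - 1, by have := hw a; omega⟩
  have hf : Injective f := fun a b hab => by
    have := hw a; have := hw b
    have hab : w (a + 1) - 1 = w (b + 1) - 1 := Fin.val_eq_of_eq hab
    have := hinj (x₁ := a + 1) (x₂ := b + 1) ⟨by omega, a.isLt⟩ ⟨by omega, b.isLt⟩ (by omega)
    exact Fin.ext (by omega)
  refine ⟨Equiv.ofBijective f (Finite.injective_iff_bijective.1 hf), fun k hk => ?_⟩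
  have := hmaps hk
  simp only [Set.mem_Icc] at hk this
  rw [pval, dif_pos hk]
  change w (k - 1 + 1) - 1 + 1 = w k
  rw [Nat.sub_add_cancel hk.1]
  omega

end Permutation

theorem stmt16_general {K : Type*} [Field K] {n : ℕ}
    (A : Matrix (Fin n) (Fin n) ℤ) (hA : IsASM A)
    (M : Matrix (Fin n) (Fin n) K) :
    (∀ (i j : ℕ) (hi : i ≤ n) (hj : j ≤ n), 1 ≤ i → 1 ≤ j →
      ((M.submatrix (Fin.castLE hi) (Fin.castLE hj)).rank : ℤ) ≤
        cornerSum A i j) ↔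
    (∃ w : Equiv.Perm (Fin n),
      (∀ i j : ℕ, 1 ≤ i → i ≤ n → 1 ≤ j → j ≤ n →
        cornerSum (permMatrix w) i j ≤ cornerSum A i j) ∧
      (∀ (i j : ℕ) (hi : i ≤ n) (hj : j ≤ n), 1 ≤ i → 1 ≤ j →
        ((M.submatrix (Fin.castLE hi) (Fin.castLE hj)).rank : ℤ) ≤
          cornerSum (permMatrix w) i j)) := by
  refine ⟨fun hM => ?_, fun ⟨w, hwA, hwM⟩ i j hi hj hi1 hj1 =>
    (hwM i j hi hj hi1 hj1).trans (hwA i j hi1 hi hj1 hj)⟩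
  obtain ⟨w, hw⟩ := exists_forall_isAdmissiblePrefix M.isCornerRankFunction_cornerRank
    (isCornerSumBound_cornerSum hA) fun i j hi1 hin hj1 hjn => by
      simpa only [M.rank_submatrix_castLE hin hjn] using hM i j hin hjn hi1 hj1
  obtain ⟨σ, hσ⟩ := exists_perm_pval_eqOn (hw n le_rfl).mapsTo (hw n le_rfl).injOn
  have hcount : ∀ i ≤ n, ∀ j, cornerSum (permMatrix σ) i j = countLE w i j := fun i hi j => by
    rw [cornerSum_permMatrix σ hi, countLE_congr (hσ.mono (Set.Icc_subset_Icc_right hi))]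
  refine ⟨σ, fun i j hi1 hin hj1 hjn => ?_, fun i j hi hj hi1 hj1 => ?_⟩
  · rw [hcount i hin]
    exact (hw i hin).countLE_le_self hi1 hin hj1 hjn
  · rw [hcount i hi, M.rank_submatrix_castLE hi hj]
    exact (hw i hi).le_countLE j hj1 hj

/-- For an algebraically closed field `K` and `A ∈ ASM(n)`, the
ASM variety `X_A` is the union of the matrix Schubert varieties `X_w` over
permutations `w ≥ A`: a matrix `M` satisfies `rank M_{[i],[j]} ≤ r_A(i,j)` for
all `1 ≤ i,j ≤ n` iff there is `w ∈ S_n` with `r_w ≤ r_A` entrywise (`w ≥ A`)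
and `rank M_{[i],[j]} ≤ r_w(i,j)` for all `i,j` (`M ∈ X_w`). -/
theorem stmt16 {K : Type*} [Field K] [IsAlgClosed K] {n : ℕ}
    (A : Matrix (Fin n) (Fin n) ℤ) (hA : IsASM A)
    (M : Matrix (Fin n) (Fin n) K) :
    (∀ (i j : ℕ) (hi : i ≤ n) (hj : j ≤ n), 1 ≤ i → 1 ≤ j →
      ((M.submatrix (Fin.castLE hi) (Fin.castLE hj)).rank : ℤ) ≤
        cornerSum A i j) ↔
    (∃ w : Equiv.Perm (Fin n),
      (∀ i j : ℕ, 1 ≤ i → i ≤ n → 1 ≤ j → j ≤ n →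
        cornerSum (permMatrix w) i j ≤ cornerSum A i j) ∧
      (∀ (i j : ℕ) (hi : i ≤ n) (hj : j ≤ n), 1 ≤ i → 1 ≤ j →
        ((M.submatrix (Fin.castLE hi) (Fin.castLE hj)).rank : ℤ) ≤
          cornerSum (permMatrix w) i j)) :=
  stmt16_general A hA M
end
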